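/- arXiv:2305.19251 — 3 statements merged into one kernel-verified Lean document; each statement's English description precedes it below -/
import Mathlib

section
/- Let G be a finite simple undirected graph with n vertices, k ≥ 1 an integer, 1 ≤ p < n, and (A_i)_{i=0}^{p} a greedy sequence for dom. Then for every B ⊆ V with |B| = p: (i) ext(A_p) ≥ (1 − 1/e) · ext(B) − p/e; (ii) if ext(A_p) > 0 then, setting θ_p = ext(A_p)/p, ext(A_p) ≥ (θ_p(e − 1)/(1 + θ_p e)) · ext(B); and (iii) setting σ_p = ext(A_p)/(n − p), ext(A_p) ≥ σ_p · ext(B). Consequently ext(A_p) ≥ max{θ_p(e − 1)/(1 + θ_p e), σ_p} · ext(B) whenever ext(A_p) > 0. -/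
open Finset
open scoped Classical

/-- The closed `k`-neighborhood of `v`: all vertices at graph distance at most `k`
from `v` (in particular `v` itself). -/
noncomputable def kNbhd {V : Type*} [Fintype V] (G : SimpleGraph V) (k : ℕ) (v : V) :
    Finset V :=
  Finset.univ.filter (fun u => G.Reachable u v ∧ G.dist u v ≤ k)

/-- `domk G k A` is the number of vertices `k`-hop dominated by `A`. -/
noncomputable def domk {V : Type*} [Fintype V] (G : SimpleGraph V) (k : ℕ) (A : Finset V) :
    ℕ :=
  (A.biUnion (kNbhd G k)).card

/-- `extk G k A` is the number of vertices externally `k`-hop dominated by `A`. -/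
noncomputable def extk {V : Type*} [Fintype V] (G : SimpleGraph V) (k : ℕ) (A : Finset V) :
    ℤ :=
  (domk G k A : ℤ) - (A.card : ℤ)

/-- A greedy sequence for `domk G k` (with `N` greedy steps): `A 0 = ∅` and each
`A (i+1)` is obtained from `A i` by inserting a new vertex maximizing `domk`. -/
def IsGreedySeq {V : Type*} [Fintype V] (G : SimpleGraph V) (k : ℕ) (N : ℕ)
    (A : ℕ → Finset V) : Prop :=
  A 0 = ∅ ∧ ∀ i < N, ∃ v ∉ A i, A (i + 1) = insert v (A i) ∧
    ∀ u ∉ A i, domk G k (insert u (A i)) ≤ domk G k (insert v (A i))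

/-!
The greedy analysis is the classical one for maximum coverage: since coverage is
submodular, the gain of the greedy vertex at step `i` is at least a `1/p`-fraction of the
coverage still missing with respect to any `p`-set `B`, so the missing part shrinks by
a factor `1 - 1/p` per step and `(1 - 1/p)^p ≤ 1/e`. All three bounds on `ext` then follow
from `dom(A_p) ≥ (1 - 1/e) dom(B)` by arithmetic, using `|A_p| = |B| = p` and
`0 ≤ ext(B) ≤ n - p`.
-/

section Coverage

variable {ι α : Type*} [DecidableEq α] (f : ι → Finset α)

theorem card_biUnion_insert [DecidableEq ι] (A : Finset ι) (v : ι) :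
    #((insert v A).biUnion f) = #(f v \ A.biUnion f) + #(A.biUnion f) := by
  rw [biUnion_insert, card_sdiff_add_card]

theorem card_biUnion_le_add_sum_card_sdiff (A B : Finset ι) :
    #(B.biUnion f) ≤ #(A.biUnion f) + ∑ v ∈ B, #(f v \ A.biUnion f) := by
  have hcover : B.biUnion f ⊆ A.biUnion f ∪ B.biUnion (fun v => f v \ A.biUnion f) := by
    intro u hu
    obtain ⟨v, hv, huv⟩ := mem_biUnion.1 hu
    by_cases hA : u ∈ A.biUnion f
    · exact mem_union_left _ hA
    · exact mem_union_right _ (mem_biUnion.2 ⟨v, hv, mem_sdiff.2 ⟨huv, hA⟩⟩)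
  calc #(B.biUnion f) ≤ #(A.biUnion f ∪ B.biUnion (fun v => f v \ A.biUnion f)) :=
        card_le_card hcover
    _ ≤ _ := (card_union_le _ _).trans (Nat.add_le_add_left card_biUnion_le _)

end Coverage

section RealInequalities

theorem sub_le_pow_mul_sub_of_forall_sub_succ_le {d : ℕ → ℝ} {D c : ℝ} {N : ℕ} (hc : 0 ≤ c)
    (h : ∀ i < N, D - d (i + 1) ≤ c * (D - d i)) :
    ∀ i ≤ N, D - d i ≤ c ^ i * (D - d 0) := by
  intro i hi
  induction i with
  | zero => simp
  | succ j ih =>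
    calc D - d (j + 1) ≤ c * (D - d j) := h j hi
      _ ≤ c * (c ^ j * (D - d 0)) := mul_le_mul_of_nonneg_left (ih (by omega)) hc
      _ = c ^ (j + 1) * (D - d 0) := by ring

theorem one_sub_inv_exp_mul_le_of_forall_le_add_mul_sub {d : ℕ → ℝ} {D : ℝ} {p : ℕ}
    (hp : 1 ≤ p) (hD : 0 ≤ D) (h0 : d 0 = 0)
    (h : ∀ i < p, D ≤ d i + p * (d (i + 1) - d i)) :
    (1 - 1 / Real.exp 1) * D ≤ d p := by
  have hp' : (1 : ℝ) ≤ p := by exact_mod_cast hp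
  have hc : 0 ≤ 1 - 1 / (p : ℝ) := sub_nonneg.2 (div_le_one_of_le₀ hp' (by positivity))
  have hstep : ∀ i < p, D - d (i + 1) ≤ (1 - 1 / (p : ℝ)) * (D - d i) := by
    intro i hi
    have hgain : (D - d i) / p ≤ d (i + 1) - d i := by
      rw [div_le_iff₀' (by positivity)]
      linarith [h i hi]
    rw [sub_mul, one_mul, one_div_mul_eq_div]
    linarith
  have hpow : (1 - 1 / (p : ℝ)) ^ p ≤ 1 / Real.exp 1 := by
    simpa [Real.exp_neg] using Real.one_sub_div_pow_le_exp_neg (n := p) (t := 1) hp'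
  have hmissing := sub_le_pow_mul_sub_of_forall_sub_succ_le hc hstep p le_rfl
  rw [h0, sub_zero] at hmissing
  linarith [mul_le_mul_of_nonneg_right hpow hD]

theorem div_mul_le_of_le {E X m : ℝ} (hE : 0 ≤ E) (hX : 0 ≤ X) (hXm : X ≤ m) :
    E / m * X ≤ E := by
  rw [div_mul_eq_mul_div, mul_div_assoc]
  exact mul_le_of_le_one_right hE (div_le_one_of_le₀ hXm (hX.trans hXm))

theorem div_mul_le_of_one_sub_inv_mul_sub_div_le {c p E X : ℝ} (hc : 0 < c) (hp : 0 < p)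
    (hE : 0 < E) (h : (1 - 1 / c) * X - p / c ≤ E) :
    E / p * (c - 1) / (1 + E / p * c) * X ≤ E := by
  have h' : (c - 1) * X ≤ p + c * E := by
    rw [show (1 - 1 / c) * X - p / c = ((c - 1) * X - p) / c by field_simp,
      div_le_iff₀ hc] at h
    linarith
  rw [show E / p * (c - 1) / (1 + E / p * c) = E * (c - 1) / (p + c * E) by field_simp,
    div_mul_eq_mul_div, div_le_iff₀ (by positivity), mul_assoc]
  exact mul_le_mul_of_nonneg_left h' hE.le

end RealInequalities

section Domination

variable {V : Type*} [Fintype V] {G : SimpleGraph V} {k : ℕ}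

theorem self_mem_kNbhd (v : V) : v ∈ kNbhd G k v := by
  simp [kNbhd]

theorem card_le_domk (A : Finset V) : #A ≤ domk G k A :=
  card_le_card fun a ha => mem_biUnion.2 ⟨a, ha, self_mem_kNbhd a⟩

theorem extk_nonneg (A : Finset V) : 0 ≤ extk G k A := by
  have := card_le_domk (G := G) (k := k) A
  unfold extk
  omega

theorem extk_le_card_sub (A : Finset V) : extk G k A ≤ Fintype.card V - #A := by
  have : domk G k A ≤ Fintype.card V := card_le_univ _
  unfold extk
  omega

theorem IsGreedySeq.card_eq {N : ℕ} {A : ℕ → Finset V} (hA : IsGreedySeq G k N A) :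
    ∀ i ≤ N, #(A i) = i := by
  intro i hi
  induction i with
  | zero => simp [hA.1]
  | succ j ih =>
    obtain ⟨v, hv, hAj, -⟩ := hA.2 j hi
    rw [hAj, card_insert_of_notMem hv, ih (by omega)]

theorem IsGreedySeq.domk_le_add_card_mul {N : ℕ} {A : ℕ → Finset V}
    (hA : IsGreedySeq G k N A) (B : Finset V) {i : ℕ} (hi : i < N) :
    (domk G k B : ℝ) ≤ domk G k (A i) + #B * ((domk G k (A (i + 1)) : ℝ) - domk G k (A i)) := by
  obtain ⟨v, hv, hAi, hmax⟩ := hA.2 i hi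
  set S := (A i).biUnion (kNbhd G k)
  have hgain : ∀ u ∈ B, #(kNbhd G k u \ S) ≤ #(kNbhd G k v \ S) := by
    intro u _
    by_cases hu : u ∈ A i
    · rw [sdiff_eq_empty_iff_subset.2 (subset_biUnion_of_mem _ hu), card_empty]
      exact Nat.zero_le _
    · have hmax_u := hmax u hu
      simp only [domk, card_biUnion_insert] at hmax_u
      exact Nat.le_of_add_le_add_right hmax_u
  have hle : domk G k B ≤ domk G k (A i) + #B * #(kNbhd G k v \ S) :=
    (card_biUnion_le_add_sum_card_sdiff _ (A i) B).trans
      (Nat.add_le_add_left (sum_le_card_nsmul _ _ _ hgain) _)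
  have hsucc : domk G k (A (i + 1)) = #(kNbhd G k v \ S) + domk G k (A i) := by
    rw [hAi]
    exact card_biUnion_insert _ _ _
  rw [hsucc, Nat.cast_add, add_sub_cancel_right]
  exact_mod_cast hle

theorem IsGreedySeq.one_sub_inv_exp_mul_domk_le {p : ℕ} (hp : 1 ≤ p) {A : ℕ → Finset V}
    (hA : IsGreedySeq G k p A) {B : Finset V} (hB : #B = p) :
    (1 - 1 / Real.exp 1) * (domk G k B : ℝ) ≤ domk G k (A p) :=
  one_sub_inv_exp_mul_le_of_forall_le_add_mul_sub (d := fun i => domk G k (A i)) hp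
    (Nat.cast_nonneg _) (by simp [hA.1, domk]) fun i hi => hB ▸ hA.domk_le_add_card_mul B hi

theorem IsGreedySeq.extk_ge {p : ℕ} (hp : 1 ≤ p) {A : ℕ → Finset V} (hA : IsGreedySeq G k p A)
    {B : Finset V} (hB : #B = p) :
    (1 - 1 / Real.exp 1) * (extk G k B : ℝ) - p / Real.exp 1 ≤ extk G k (A p) := by
  have hcov := hA.one_sub_inv_exp_mul_domk_le hp hB
  simp only [extk, hA.card_eq p le_rfl, hB, Int.cast_sub, Int.cast_natCast]
  have hexpand : (1 - 1 / Real.exp 1) * ((domk G k B : ℝ) - p) - p / Real.exp 1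
      = (1 - 1 / Real.exp 1) * domk G k B - p := by ring
  linarith

end Domination

theorem greedy_ext_guarantees_general {V : Type*} [Fintype V] (G : SimpleGraph V)
    (k : ℕ) (p : ℕ) (hp1 : 1 ≤ p)
    (A : ℕ → Finset V) (hA : IsGreedySeq G k p A) :
    ∀ B : Finset V, B.card = p →
      ((1 - 1 / Real.exp 1) * (extk G k B : ℝ) - (p : ℝ) / Real.exp 1 ≤
        (extk G k (A p) : ℝ)) ∧
      ((extk G k (A p) : ℝ) / (Fintype.card V - p) * (extk G k B : ℝ) ≤
        (extk G k (A p) : ℝ)) ∧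
      (0 < extk G k (A p) →
        ((extk G k (A p) : ℝ) / p * (Real.exp 1 - 1)) /
            (1 + (extk G k (A p) : ℝ) / p * Real.exp 1) * (extk G k B : ℝ) ≤
          (extk G k (A p) : ℝ) ∧
        max (((extk G k (A p) : ℝ) / p * (Real.exp 1 - 1)) /
              (1 + (extk G k (A p) : ℝ) / p * Real.exp 1))
            ((extk G k (A p) : ℝ) / (Fintype.card V - p)) * (extk G k B : ℝ) ≤
          (extk G k (A p) : ℝ)) := by
  intro B hB
  have hadd := hA.extk_ge hp1 hB
  have hB0 : (0 : ℝ) ≤ extk G k B := by exact_mod_cast extk_nonneg B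
  have hsigma : (extk G k (A p) : ℝ) / (Fintype.card V - p) * extk G k B ≤ extk G k (A p) := by
    refine div_mul_le_of_le (by exact_mod_cast extk_nonneg _) hB0 ?_
    rw [← hB]
    exact_mod_cast extk_le_card_sub B
  refine ⟨hadd, hsigma, fun hpos => ?_⟩
  have htheta := div_mul_le_of_one_sub_inv_mul_sub_div_le (Real.exp_pos 1)
    (by exact_mod_cast hp1) (by exact_mod_cast hpos) hadd
  exact ⟨htheta, (max_mul_of_nonneg _ _ hB0).trans_le (max_le htheta hsigma)⟩

/-- guarantees for the greedy sequence with respect to the external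
domination objective. -/
theorem greedy_ext_guarantees {V : Type*} [Fintype V] (G : SimpleGraph V)
    (k : ℕ) (hk : 1 ≤ k) (p : ℕ) (hp1 : 1 ≤ p) (hpn : p < Fintype.card V)
    (A : ℕ → Finset V) (hA : IsGreedySeq G k p A) :
    ∀ B : Finset V, B.card = p →
      ((1 - 1 / Real.exp 1) * (extk G k B : ℝ) - (p : ℝ) / Real.exp 1 ≤
        (extk G k (A p) : ℝ)) ∧
      ((extk G k (A p) : ℝ) / (Fintype.card V - p) * (extk G k B : ℝ) ≤
        (extk G k (A p) : ℝ)) ∧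
      (0 < extk G k (A p) →
        ((extk G k (A p) : ℝ) / p * (Real.exp 1 - 1)) /
            (1 + (extk G k (A p) : ℝ) / p * Real.exp 1) * (extk G k B : ℝ) ≤
          (extk G k (A p) : ℝ) ∧
        max (((extk G k (A p) : ℝ) / p * (Real.exp 1 - 1)) /
              (1 + (extk G k (A p) : ℝ) / p * Real.exp 1))
            ((extk G k (A p) : ℝ) / (Fintype.card V - p)) * (extk G k B : ℝ) ≤
          (extk G k (A p) : ℝ)) :=
  greedy_ext_guarantees_general G k p hp1 A hA
end

section
/- Let k ≥ 1 and let F be a forest with n vertices whose connected components are t rooted trees T_1, …, T_t, each having at least k + 1 vertices and each having every child subtree of its root of at most k vertices. Let (Â_p)_{p=0}^{n} be a greedy sequence for the k-hop dom on F. Then ext(Â_p) ≥ k · p for all 1 ≤ p ≤ t, and ext(Â_p) = n − p for all t ≤ p ≤ n. -/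
open Finset
open scoped Classical

/-!
A geodesic of length `d` from a root `r` runs through a single child `c` of `r`, and its vertices
at positions `1, …, d` all lie in the child subtree of `c`; so every vertex of a tree is within
distance `k` of its root, and the closed `k`-neighborhood of a root is its whole tree, while that
of any other vertex stays inside its own tree. As long as some tree is not dominated yet, picking
its root gains the whole tree while a vertex of an already dominated tree gains nothing, so greedy
picks a vertex of a fresh tree and dominates all of it. Hence the first `p ≤ t` greedy vertices lie
in `p` distinct trees and dominate exactly their union, of size at least `(k + 1) p`, and after `t`
steps every vertex is dominated.
-/

namespace SimpleGraph

variable {V : Type*} {G : SimpleGraph V}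

theorem Walk.dist_getVert_getVert_of_length_eq_dist {u v : V} {W : G.Walk u v}
    (hW : W.length = G.dist u v) {i j : ℕ} (hij : i ≤ j) (hj : j ≤ W.length) :
    G.dist (W.getVert i) (W.getVert j) = j - i := by
  have hsub := ((W.drop i).isSubwalk_take (j - i)).trans (W.isSubwalk_drop i)
  have := length_eq_dist_of_subwalk hW hsub
  rw [Walk.take_length, Walk.drop_length, Walk.drop_getVert, Nat.add_sub_cancel' hij] at this
  omega

theorem bijective_connectedComponentMk_comp {ι : Type*} {r : ι → V}
    (h : ∀ v, ∃! i, G.Reachable (r i) v) : Function.Bijective (G.connectedComponentMk ∘ r) := by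
  refine ⟨fun i j hij => (h (r j)).unique (ConnectedComponent.exact hij) (Reachable.refl _), ?_⟩
  intro C
  induction C using ConnectedComponent.ind with
  | h v =>
    obtain ⟨i, hi, -⟩ := h v
    exact ⟨i, ConnectedComponent.sound hi⟩

variable [Fintype V] {k : ℕ}

theorem dist_le_of_card_childSubtree_le {r u : V} (hru : G.Reachable r u)
    (hchild : ∀ c, G.Adj r c → (univ.filter fun w => G.dist r w = G.dist c w + 1).card ≤ k) :
    G.dist r u ≤ k := by
  obtain ⟨W, hW⟩ := hru.exists_walk_length_eq_dist
  rcases Nat.eq_zero_or_pos W.length with hd | hd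
  · omega
  have hdist {i j : ℕ} (hij : i ≤ j) (hj : j ≤ W.length) :=
    W.dist_getVert_getVert_of_length_eq_dist hW hij hj
  have hroot {m : ℕ} (hm : m ≤ W.length) : G.dist r (W.getVert m) = m := by
    simpa using hdist (Nat.zero_le m) hm
  have hmaps : ∀ m ∈ Icc 1 W.length,
      W.getVert m ∈ univ.filter fun w => G.dist r w = G.dist (W.getVert 1) w + 1 := by
    intro m hm
    rw [mem_Icc] at hm
    simp only [mem_filter, mem_univ, true_and, hroot hm.2, hdist hm.1 hm.2]
    omega
  have hinj : Set.InjOn W.getVert (Icc 1 W.length) := by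
    intro a ha b hb hab
    rw [coe_Icc] at ha hb
    rw [← hroot ha.2, ← hroot hb.2, hab]
  have hadj : G.Adj r (W.getVert 1) := by simpa using W.adj_getVert_succ hd
  simpa [hW] using (card_le_card_of_injOn W.getVert hmaps hinj).trans (hchild _ hadj)

variable (G) in
noncomputable def componentVerts (S : Finset G.ConnectedComponent) : Finset V :=
  univ.filter fun u => G.connectedComponentMk u ∈ S

@[simp]
theorem mem_componentVerts {S : Finset G.ConnectedComponent} {u : V} :
    u ∈ G.componentVerts S ↔ G.connectedComponentMk u ∈ S := by
  simp [componentVerts]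

@[simp]
theorem componentVerts_empty : G.componentVerts ∅ = ∅ := by
  ext; simp

@[simp]
theorem componentVerts_univ : G.componentVerts univ = univ := by
  ext; simp

theorem componentVerts_insert (C : G.ConnectedComponent) (S : Finset G.ConnectedComponent) :
    G.componentVerts (insert C S) = G.componentVerts {C} ∪ G.componentVerts S := by
  ext; simp

theorem componentVerts_singleton_connectedComponentMk (v : V) :
    G.componentVerts {G.connectedComponentMk v} = univ.filter (G.Reachable v) := by
  ext u
  simpa using ⟨Reachable.symm, Reachable.symm⟩

theorem componentVerts_singleton_nonempty (C : G.ConnectedComponent) :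
    (G.componentVerts {C}).Nonempty := by
  induction C using ConnectedComponent.ind with
  | h v => exact ⟨v, by simp⟩

theorem card_componentVerts (S : Finset G.ConnectedComponent) :
    #(G.componentVerts S) = ∑ C ∈ S, #(G.componentVerts {C}) := by
  rw [card_eq_sum_card_fiberwise (f := G.connectedComponentMk) fun u hu => by simpa using hu]
  refine sum_congr rfl fun C hC => congrArg card ?_
  ext u
  simp only [mem_filter, mem_componentVerts, mem_singleton]
  exact ⟨And.right, fun h => ⟨h ▸ hC, h⟩⟩

theorem card_componentVerts_insert {C : G.ConnectedComponent} {S : Finset G.ConnectedComponent}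
    (hC : C ∉ S) :
    #(G.componentVerts (insert C S)) = #(G.componentVerts {C}) + #(G.componentVerts S) := by
  rw [card_componentVerts, sum_insert hC, ← card_componentVerts]

theorem kNbhd_subset_componentVerts (v : V) :
    kNbhd G k v ⊆ G.componentVerts {G.connectedComponentMk v} := by
  intro u hu
  simp only [kNbhd, mem_filter, mem_univ, true_and] at hu
  simpa using hu.1

theorem kNbhd_eq_componentVerts {v : V} (h : ∀ u, G.Reachable v u → G.dist v u ≤ k) :
    kNbhd G k v = G.componentVerts {G.connectedComponentMk v} := by
  refine (kNbhd_subset_componentVerts v).antisymm fun u hu => ?_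
  have hvu : G.Reachable v u := (by simpa using hu : G.Reachable u v).symm
  simpa [kNbhd, dist_comm] using ⟨hvu.symm, h u hvu⟩

theorem connectedComponentMk_of_kNbhd_eq {c : V} {C : G.ConnectedComponent}
    (hc : kNbhd G k c = G.componentVerts {C}) : G.connectedComponentMk c = C := by
  have : c ∈ kNbhd G k c := by simp [kNbhd]
  simpa [hc] using this

theorem domk_insert_of_kNbhd_eq {B : Finset V} {S : Finset G.ConnectedComponent}
    (hB : B.biUnion (kNbhd G k) = G.componentVerts S) {c : V} {C : G.ConnectedComponent}
    (hc : kNbhd G k c = G.componentVerts {C}) :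
    domk G k (insert c B) = #(G.componentVerts (insert C S)) := by
  rw [domk, biUnion_insert, hB, hc, componentVerts_insert]

/-- Comparing with the center of a fresh component, which gains all of it, forces a greedy vertex
into a fresh component. -/
theorem biUnion_kNbhd_insert_of_forall_domk_le
    (hcenter : ∀ C : G.ConnectedComponent, ∃ c, kNbhd G k c = G.componentVerts {C})
    {B : Finset V} (hB : B.biUnion (kNbhd G k) = G.componentVerts (B.image G.connectedComponentMk))
    (hfresh : B.image G.connectedComponentMk ≠ univ) {v : V}
    (hmax : ∀ u ∉ B, domk G k (insert u B) ≤ domk G k (insert v B)) :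
    G.connectedComponentMk v ∉ B.image G.connectedComponentMk ∧
      (insert v B).biUnion (kNbhd G k) =
        G.componentVerts (insert (G.connectedComponentMk v) (B.image G.connectedComponentMk)) := by
  set S := B.image G.connectedComponentMk
  have hgain : ∀ C ∉ S, #(G.componentVerts (insert C S)) ≤ domk G k (insert v B) := by
    intro C hC
    obtain ⟨c, hc⟩ := hcenter C
    have hcB : c ∉ B := fun hcB =>
      hC (connectedComponentMk_of_kNbhd_eq hc ▸ mem_image_of_mem _ hcB)
    exact domk_insert_of_kNbhd_eq hB hc ▸ hmax c hcB
  have hsub : (insert v B).biUnion (kNbhd G k) ⊆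
      G.componentVerts (insert (G.connectedComponentMk v) S) := by
    rw [biUnion_insert, hB, componentVerts_insert]
    exact union_subset_union (kNbhd_subset_componentVerts v) subset_rfl
  have hv : G.connectedComponentMk v ∉ S := by
    intro hv
    obtain ⟨C, hC⟩ := not_forall.mp (mt eq_univ_of_forall hfresh)
    have := (hgain C hC).trans (card_le_card hsub)
    rw [insert_eq_of_mem hv, card_componentVerts_insert hC] at this
    have := (componentVerts_singleton_nonempty C).card_pos
    omega
  exact ⟨hv, eq_of_subset_of_card_le hsub (hgain _ hv)⟩

end SimpleGraph

namespace IsGreedySeq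

variable {V : Type*} [Fintype V] {G : SimpleGraph V} {k N : ℕ} {A : ℕ → Finset V}

theorem card_eq_s7 (hA : IsGreedySeq G k N A) {p : ℕ} (hp : p ≤ N) : #(A p) = p := by
  induction p with
  | zero => simp [hA.1]
  | succ p ih =>
    obtain ⟨v, hv, hins, -⟩ := hA.2 p hp
    rw [hins, card_insert_of_notMem hv, ih (by omega)]

theorem subset_of_le (hA : IsGreedySeq G k N A) {p q : ℕ} (hpq : p ≤ q) (hq : q ≤ N) :
    A p ⊆ A q := by
  induction q, hpq using Nat.le_induction with
  | base => exact subset_rfl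
  | succ q _ ih =>
    obtain ⟨v, -, hins, -⟩ := hA.2 q hq
    exact (ih (by omega)).trans (hins ▸ subset_insert v (A q))

variable (hcenter : ∀ C : G.ConnectedComponent, ∃ c, kNbhd G k c = G.componentVerts {C})
include hcenter

theorem biUnion_kNbhd_eq (hA : IsGreedySeq G k N A) {p : ℕ} (hpN : p ≤ N)
    (hp : p ≤ Fintype.card G.ConnectedComponent) :
    #((A p).image G.connectedComponentMk) = p ∧
      (A p).biUnion (kNbhd G k) = G.componentVerts ((A p).image G.connectedComponentMk) := by
  induction p with
  | zero => simp [hA.1]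
  | succ p ih =>
    obtain ⟨hcard, hdom⟩ := ih (by omega) (by omega)
    obtain ⟨v, -, hins, hmax⟩ := hA.2 p hpN
    have hfresh : (A p).image G.connectedComponentMk ≠ univ := by
      intro h
      rw [h, card_univ] at hcard
      omega
    obtain ⟨hv, hdom'⟩ := SimpleGraph.biUnion_kNbhd_insert_of_forall_domk_le hcenter hdom hfresh hmax
    rw [hins, image_insert, card_insert_of_notMem hv, hcard]
    exact ⟨rfl, hdom'⟩

theorem le_extk (hA : IsGreedySeq G k N A) {m : ℕ}
    (hsize : ∀ C : G.ConnectedComponent, m + 1 ≤ #(G.componentVerts {C}))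
    {p : ℕ} (hpN : p ≤ N) (hp : p ≤ Fintype.card G.ConnectedComponent) :
    (m : ℤ) * p ≤ extk G k (A p) := by
  obtain ⟨hcard, hdom⟩ := hA.biUnion_kNbhd_eq hcenter hpN hp
  have hdom_ge : (m + 1) * p ≤ domk G k (A p) := calc
    (m + 1) * p = ∑ _C ∈ (A p).image G.connectedComponentMk, (m + 1) := by simp [hcard, mul_comm]
    _ ≤ ∑ C ∈ (A p).image G.connectedComponentMk, #(G.componentVerts {C}) :=
      sum_le_sum fun C _ => hsize C
    _ = domk G k (A p) := by rw [domk, hdom, SimpleGraph.card_componentVerts]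
  have : ((m : ℤ) + 1) * p ≤ domk G k (A p) := mod_cast hdom_ge
  rw [extk, hA.card_eq_s7 hpN]
  linarith

theorem extk_eq (hA : IsGreedySeq G k N A) {p : ℕ} (hpN : p ≤ N)
    (hp : Fintype.card G.ConnectedComponent ≤ p) :
    extk G k (A p) = (Fintype.card V : ℤ) - p := by
  obtain ⟨hcard, hdom⟩ := hA.biUnion_kNbhd_eq hcenter (hp.trans hpN) le_rfl
  have hall : (A (Fintype.card G.ConnectedComponent)).biUnion (kNbhd G k) = univ := by
    rw [hdom, eq_univ_of_card _ hcard, SimpleGraph.componentVerts_univ]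
  have : (A p).biUnion (kNbhd G k) = univ :=
    eq_univ_of_forall fun u => biUnion_subset_biUnion_of_subset_left _ (hA.subset_of_le hp hpN)
      (hall ▸ mem_univ u)
  rw [extk, domk, this, card_univ, hA.card_eq_s7 hpN]

end IsGreedySeq

/-- The component of `v` is the set of vertices reachable from `v`; a vertex `u` belongs to the
child subtree of a child `c` of a root `r` iff `dist r u = dist c u + 1`. -/
theorem greedy_ext_on_decomposed_forest_delta_zero_general {V : Type*} [Fintype V]
    (F : SimpleGraph V) (k t : ℕ)
    (r : Fin t → V)
    (hcomp : ∀ v : V, ∃! i : Fin t, F.Reachable (r i) v)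
    (hsize : ∀ i : Fin t,
      k + 1 ≤ (Finset.univ.filter (fun u => F.Reachable (r i) u)).card)
    (hchild : ∀ i : Fin t, ∀ c : V, F.Adj (r i) c →
      (Finset.univ.filter (fun u => F.dist (r i) u = F.dist c u + 1)).card ≤ k)
    (A : ℕ → Finset V) (hA : IsGreedySeq F k (Fintype.card V) A) :
    (∀ p : ℕ, 1 ≤ p → p ≤ t → (k : ℤ) * p ≤ extk F k (A p)) ∧
    (∀ p : ℕ, t ≤ p → p ≤ Fintype.card V →
      extk F k (A p) = (Fintype.card V : ℤ) - p) := by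
  have hroots := F.bijective_connectedComponentMk_comp hcomp
  have hcard : Fintype.card F.ConnectedComponent = t := by
    simpa using (Fintype.card_of_bijective hroots).symm
  have htn : t ≤ Fintype.card V := by
    simpa using Fintype.card_le_of_injective r hroots.1.of_comp
  have hcenter : ∀ C : F.ConnectedComponent, ∃ c, kNbhd F k c = F.componentVerts {C} := by
    intro C
    obtain ⟨i, rfl⟩ := hroots.2 C
    exact ⟨r i, SimpleGraph.kNbhd_eq_componentVerts fun u hu =>
      SimpleGraph.dist_le_of_card_childSubtree_le hu (hchild i)⟩
  have hsize' : ∀ C : F.ConnectedComponent, k + 1 ≤ #(F.componentVerts {C}) := by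
    intro C
    obtain ⟨i, rfl⟩ := hroots.2 C
    simpa [SimpleGraph.componentVerts_singleton_connectedComponentMk] using hsize i
  exact ⟨fun p _ hpt => hA.le_extk hcenter hsize' (hpt.trans htn) (hcard ▸ hpt),
    fun p htp hpn => hA.extk_eq hcenter hpn (hcard ▸ htp)⟩

/-- greedy external-domination guarantees on a forest whose `t`
components are rooted trees of at least `k+1` vertices, each child subtree of each
root having at most `k` vertices.  (The component of `v` is the set of vertices
reachable from `v`; a vertex `u` belongs to the child subtree of a child `c` of a
root `r` iff `dist r u = dist c u + 1`.) -/
theorem greedy_ext_on_decomposed_forest_delta_zero {V : Type*} [Fintype V]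
    (F : SimpleGraph V) (hF : F.IsAcyclic) (k t : ℕ) (hk : 1 ≤ k)
    (r : Fin t → V)
    (hcomp : ∀ v : V, ∃! i : Fin t, F.Reachable (r i) v)
    (hsize : ∀ i : Fin t,
      k + 1 ≤ (Finset.univ.filter (fun u => F.Reachable (r i) u)).card)
    (hchild : ∀ i : Fin t, ∀ c : V, F.Adj (r i) c →
      (Finset.univ.filter (fun u => F.dist (r i) u = F.dist c u + 1)).card ≤ k)
    (A : ℕ → Finset V) (hA : IsGreedySeq F k (Fintype.card V) A) :
    (∀ p : ℕ, 1 ≤ p → p ≤ t → (k : ℤ) * p ≤ extk F k (A p)) ∧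
    (∀ p : ℕ, t ≤ p → p ≤ Fintype.card V →
      extk F k (A p) = (Fintype.card V : ℤ) - p) :=
  greedy_ext_on_decomposed_forest_delta_zero_general F k t r hcomp hsize hchild A hA
end

section
/- Consider an election instance in which every candidate is a voter (Z ⊆ X), every candidate approves of itself (c ∈ S_c for all c ∈ Z), and every candidate approves of at least one candidate other than itself (for every c ∈ Z there exists c' ∈ Z with c' ≠ c and c ∈ S_{c'}). Let 1 ≤ p ≤ |Z| and let (C_i)_{i=0}^{p} be a greedy sequence for rep. Then ext(C_p) ≥ ((e − 1)/(e + 1)) · ext(C') for every committee C' ⊆ Z with |C'| = p. -/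
/-!
Write `a i = rep(C_i)`, `R = rep(C')` with `|C'| = p`. Coverage is submodular and greedy picks the
best marginal gain, so every step satisfies `R ≤ a i + p (a (i+1) - a i)`; moreover `a p ≥ p`
because committee members represent themselves. If every greedy step gains at least two voters,
the classical `(1 - 1/e)` greedy bound combined with `a p ≥ 2p` gives the claim. Otherwise look at
the first step `j` gaining at most one voter: either some step gains nothing, and then
`R ≤ a p`, or all steps gain at least one, so `ext` is nondecreasing along the sequence and
`R - p ≤ a j ≤ 2 (a j - j) ≤ 2 ext(C_p)`. In both cases `R - p ≤ 2 ext(C_p)`, and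
`2 (e - 1) ≤ e + 1` since `e ≤ 3`.
-/

open Finset

section Coverage

variable {ι α : Type*} [DecidableEq α] (S : ι → Finset α)

theorem card_biUnion_insert_s16 [DecidableEq ι] (c : ι) (D : Finset ι) :
    #((insert c D).biUnion S) = #(D.biUnion S) + #(S c \ D.biUnion S) := by
  rw [biUnion_insert, ← card_sdiff_add_card, add_comm]

theorem card_biUnion_le_card_biUnion_add_sum (D C : Finset ι) :
    #(C.biUnion S) ≤ #(D.biUnion S) + ∑ c ∈ C, #(S c \ D.biUnion S) := by
  calc #(C.biUnion S) ≤ #(D.biUnion S ∪ C.biUnion fun c => S c \ D.biUnion S) := by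
        refine card_le_card fun x hx => ?_
        obtain ⟨c, hc, hxc⟩ := mem_biUnion.mp hx
        by_cases hxD : x ∈ D.biUnion S
        · exact mem_union_left _ hxD
        · exact mem_union_right _ (mem_biUnion.mpr ⟨c, hc, mem_sdiff.mpr ⟨hxc, hxD⟩⟩)
    _ ≤ _ := (card_union_le _ _).trans (Nat.add_le_add_left card_biUnion_le _)

end Coverage

section Greedy

variable {α : Type*} [DecidableEq α] {Z : Finset α} {S : α → Finset α}

def IsGreedyStep (Z : Finset α) (S : α → Finset α) (D D' : Finset α) : Prop :=
  ∃ c ∈ Z \ D, D' = insert c D ∧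
    ∀ c' ∈ Z \ D, #((insert c' D).biUnion S) ≤ #((insert c D).biUnion S)

namespace IsGreedyStep

variable {D D' : Finset α}

theorem subset_and_card (h : IsGreedyStep Z S D D') (hD : D ⊆ Z) : D' ⊆ Z ∧ #D' = #D + 1 := by
  obtain ⟨c, hc, rfl, -⟩ := h
  rw [mem_sdiff] at hc
  exact ⟨insert_subset hc.1 hD, card_insert_of_notMem hc.2⟩

theorem card_biUnion_le (h : IsGreedyStep Z S D D') : #(D.biUnion S) ≤ #(D'.biUnion S) := by
  obtain ⟨c, -, rfl, -⟩ := h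
  exact card_le_card (biUnion_subset_biUnion_of_subset_left _ (subset_insert _ _))

theorem card_sdiff_le_gain (h : IsGreedyStep Z S D D') {c : α} (hc : c ∈ Z) :
    #(S c \ D.biUnion S) ≤ #(D'.biUnion S) - #(D.biUnion S) := by
  by_cases hcD : c ∈ D
  · simp [sdiff_eq_empty_iff_subset.mpr (subset_biUnion_of_mem S hcD)]
  · obtain ⟨c₀, -, rfl, hmax⟩ := h
    have hc₀ := hmax c (mem_sdiff.mpr ⟨hc, hcD⟩)
    rw [card_biUnion_insert_s16 S c D] at hc₀
    omega

theorem card_biUnion_le_add_mul_gain (h : IsGreedyStep Z S D D') {C : Finset α} (hC : C ⊆ Z) :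
    #(C.biUnion S) ≤ #(D.biUnion S) + #C * (#(D'.biUnion S) - #(D.biUnion S)) :=
  calc #(C.biUnion S) ≤ #(D.biUnion S) + ∑ c ∈ C, #(S c \ D.biUnion S) :=
        card_biUnion_le_card_biUnion_add_sum S D C
    _ ≤ #(D.biUnion S) + ∑ _c ∈ C, (#(D'.biUnion S) - #(D.biUnion S)) := by
        gcongr with c hc
        exact h.card_sdiff_le_gain (hC hc)
    _ = _ := by rw [sum_const, smul_eq_mul]

end IsGreedyStep

theorem greedy_subset_and_card {C : ℕ → Finset α} {p : ℕ} (hC0 : C 0 = ∅)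
    (hgreedy : ∀ i < p, IsGreedyStep Z S (C i) (C (i + 1))) :
    ∀ i ≤ p, C i ⊆ Z ∧ #(C i) = i
  | 0, _ => by simp [hC0]
  | i + 1, hi => by
    obtain ⟨hZ, hcard⟩ := greedy_subset_and_card hC0 hgreedy i (by omega)
    obtain ⟨hZ', hcard'⟩ := (hgreedy i hi).subset_and_card hZ
    exact ⟨hZ', by omega⟩

end Greedy

section Gains

variable {a : ℕ → ℕ} {R p : ℕ}

theorem add_mul_le_of_add_le_succ {n d : ℕ} (h : ∀ i < n, a i + d ≤ a (i + 1)) {i j : ℕ}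
    (hij : i ≤ j) (hjn : j ≤ n) : a i + d * (j - i) ≤ a j := by
  obtain ⟨k, rfl⟩ := Nat.exists_eq_add_of_le hij
  rw [Nat.add_sub_cancel_left]
  induction k with
  | zero => simp
  | succ k ih =>
    show a i + d * (k + 1) ≤ a (i + k + 1)
    linarith [ih (by omega) (by omega), h (i + k) (by omega)]

theorem add_le_two_mul_of_exists_gain_le_one (hmono : ∀ i < p, a i ≤ a (i + 1))
    (hp : p ≤ a p) (hkey : ∀ i < p, R ≤ a i + p * (a (i + 1) - a i))
    (h : ∃ j < p, a (j + 1) ≤ a j + 1) : R + p ≤ 2 * a p := by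
  by_cases hzero : ∃ i < p, a (i + 1) ≤ a i
  · obtain ⟨i, hi, hgain⟩ := hzero
    have hRi : R ≤ a i := by simpa [Nat.sub_eq_zero_of_le hgain] using hkey i hi
    have hip : a i + 0 * (p - i) ≤ a p := add_mul_le_of_add_le_succ (by simpa) hi.le le_rfl
    omega
  push Not at hzero
  obtain ⟨hjp, hj⟩ := Nat.find_spec h
  set j := Nat.find h
  have hRj : R ≤ a j + p := by
    have hgain : p * (a (j + 1) - a j) ≤ p * 1 := Nat.mul_le_mul_left p (by omega)
    linarith [hkey j hjp]
  have h2j : a 0 + 2 * (j - 0) ≤ a j :=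
    add_mul_le_of_add_le_succ (fun i hi => by have := Nat.find_min h hi; omega)
      (Nat.zero_le j) le_rfl
  have hjp' : a j + 1 * (p - j) ≤ a p := add_mul_le_of_add_le_succ hzero hjp.le le_rfl
  omega

theorem one_sub_exp_neg_one_mul_le {a : ℕ → ℝ} {R : ℝ} (hp : 0 < p) (ha0 : a 0 = 0)
    (hR : 0 ≤ R)
    (hkey : ∀ i < p, R ≤ a i + p * (a (i + 1) - a i)) : (1 - Real.exp (-1)) * R ≤ a p := by
  have hp' : (0 : ℝ) < p := by exact_mod_cast hp
  have hq : 0 ≤ 1 - 1 / (p : ℝ) := by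
    rw [sub_nonneg, div_le_one hp']
    exact_mod_cast hp
  have hiter : ∀ i ≤ p, R - a i ≤ (1 - 1 / (p : ℝ)) ^ i * R := by
    intro i hi
    induction i with
    | zero => simp [ha0]
    | succ i ih =>
      calc R - a (i + 1) ≤ (1 - 1 / (p : ℝ)) * (R - a i) := by
            rw [one_sub_div hp'.ne', div_mul_eq_mul_div, le_div_iff₀ hp']
            nlinarith [hkey i hi]
        _ ≤ (1 - 1 / (p : ℝ)) * ((1 - 1 / (p : ℝ)) ^ i * R) :=
            mul_le_mul_of_nonneg_left (ih (by omega)) hq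
        _ = (1 - 1 / (p : ℝ)) ^ (i + 1) * R := by ring
  have hexp : (1 - 1 / (p : ℝ)) ^ p ≤ Real.exp (-1) :=
    Real.one_sub_div_pow_le_exp_neg (by exact_mod_cast hp)
  nlinarith [hiter p le_rfl, mul_le_mul_of_nonneg_right hexp hR]

theorem ext_approx_of_greedy_gains (hp1 : 1 ≤ p) (ha0 : a 0 = 0)
    (hmono : ∀ i < p, a i ≤ a (i + 1)) (hp : p ≤ a p)
    (hkey : ∀ i < p, R ≤ a i + p * (a (i + 1) - a i)) :
    (Real.exp 1 - 1) / (Real.exp 1 + 1) * ((R : ℝ) - p) ≤ (a p : ℝ) - p := by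
  have he2 : (2 : ℝ) < Real.exp 1 := by linarith [Real.exp_one_gt_d9]
  have he3 : Real.exp 1 < 3 := by linarith [Real.exp_one_lt_d9]
  have hp' : (p : ℝ) ≤ a p := by exact_mod_cast hp
  rw [div_mul_eq_mul_div, div_le_iff₀ (by positivity)]
  by_cases h : ∃ j < p, a (j + 1) ≤ a j + 1
  · have hR : (R : ℝ) + p ≤ 2 * a p := by
      exact_mod_cast add_le_two_mul_of_exists_gain_le_one hmono hp hkey h
    nlinarith
  · push Not at h
    have h2p : a 0 + 2 * (p - 0) ≤ a p :=
      add_mul_le_of_add_le_succ (fun i hi => h i hi) (Nat.zero_le p) le_rfl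
    have h2p' : 2 * (p : ℝ) ≤ a p := by
      rw [ha0, zero_add, Nat.sub_zero] at h2p
      exact_mod_cast h2p
    have hR := one_sub_exp_neg_one_mul_le (a := fun i => (a i : ℝ)) (R := R) hp1
      (by simp [ha0]) (Nat.cast_nonneg _) fun i hi => by
        rw [← Nat.cast_sub (hmono i hi)]
        exact_mod_cast hkey i hi
    have he : Real.exp 1 * Real.exp (-1) = 1 := by rw [← Real.exp_add]; simp
    nlinarith

end Gains

theorem greedy_max_ext_representation_general {α : Type*} [DecidableEq α]
    (Z : Finset α) (S : α → Finset α)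
    (hself : ∀ c ∈ Z, c ∈ S c)
    (p : ℕ) (hp1 : 1 ≤ p)
    (C : ℕ → Finset α) (hC0 : C 0 = ∅)
    (hgreedy : ∀ i < p, ∃ c ∈ Z \ C i, C (i + 1) = insert c (C i) ∧
      ∀ c' ∈ Z \ C i,
        ((insert c' (C i)).biUnion S).card ≤ ((insert c (C i)).biUnion S).card) :
    ∀ C' ⊆ Z, C'.card = p →
      (Real.exp 1 - 1) / (Real.exp 1 + 1) *
          (((C'.biUnion S).card : ℝ) - (C'.card : ℝ)) ≤
        (((C p).biUnion S).card : ℝ) - ((C p).card : ℝ) := by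
  intro C' hC'Z hC'p
  have hstep : ∀ i < p, IsGreedyStep Z S (C i) (C (i + 1)) := hgreedy
  obtain ⟨hCpZ, hCp⟩ := greedy_subset_and_card hC0 hstep p le_rfl
  have hself_rep : p ≤ #((C p).biUnion S) := by
    simpa [hCp] using card_le_card fun c hc => mem_biUnion.mpr ⟨c, hc, hself c (hCpZ hc)⟩
  rw [hC'p, hCp]
  exact ext_approx_of_greedy_gains (a := fun i => #((C i).biUnion S)) hp1 (by simp [hC0])
    (fun i hi => (hstep i hi).card_biUnion_le) hself_rep
    fun i hi => hC'p ▸ (hstep i hi).card_biUnion_le_add_mul_gain hC'Z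

/-- if every candidate is a voter, approves of itself, and is approved
by at least one other candidate, then the greedy sequence for `rep` achieves an
`(e-1)/(e+1)`-approximation for the number of externally represented voters
`ext(C) = rep(C) - |C|`, where `rep(C) = |⋃_{c ∈ C} S c|`. -/
theorem greedy_max_ext_representation {α : Type*} [DecidableEq α]
    (X Z : Finset α) (S : α → Finset α)
    (hZX : Z ⊆ X) (hSX : ∀ c ∈ Z, S c ⊆ X)
    (hself : ∀ c ∈ Z, c ∈ S c)
    (hother : ∀ c ∈ Z, ∃ c' ∈ Z, c' ≠ c ∧ c ∈ S c')
    (p : ℕ) (hp1 : 1 ≤ p) (hpZ : p ≤ Z.card)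
    (C : ℕ → Finset α) (hC0 : C 0 = ∅)
    (hgreedy : ∀ i < p, ∃ c ∈ Z \ C i, C (i + 1) = insert c (C i) ∧
      ∀ c' ∈ Z \ C i,
        ((insert c' (C i)).biUnion S).card ≤ ((insert c (C i)).biUnion S).card) :
    ∀ C' ⊆ Z, C'.card = p →
      (Real.exp 1 - 1) / (Real.exp 1 + 1) *
          (((C'.biUnion S).card : ℝ) - (C'.card : ℝ)) ≤
        (((C p).biUnion S).card : ℝ) - ((C p).card : ℝ) :=
  greedy_max_ext_representation_general Z S hself p hp1 C hC0 hgreedy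
end
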